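/- Let n = 2^l for some natural number l. Then every eigenvector y of the Laplacian matrix L of the path P_n has all entries nonzero, i.e., y_r ≠ 0 for every vertex v_r; equivalently, P_n is omnicontrollable: it is controllable with any single vertex selected as leader. -/

import Mathlib

/-- The Laplacian matrix (degree matrix minus adjacency matrix) of the path graph `P_n`
on vertices `v_1, …, v_n`, where `v_i` and `v_j` are adjacent iff `|i - j| = 1`.
The vertex `v_r` corresponds to the index `⟨r - 1, _⟩ : Fin n`. -/
def pathLap (n : ℕ) : Matrix (Fin n) (Fin n) ℝ :=
  Matrix.of fun i j =>
    if i = j then ((if (i : ℕ) = 0 then 0 else 1) + (if (i : ℕ) + 1 = n then 0 else 1))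
    else if (i : ℕ) + 1 = (j : ℕ) ∨ (j : ℕ) + 1 = (i : ℕ) then -1 else 0

lemma sum_ite_coe {n : ℕ} (c : ℕ) (f : Fin n → ℝ) :
    (∑ j : Fin n, if (j : ℕ) = c then f j else 0) =
      if h : c < n then f ⟨c, h⟩ else 0 := by
  split_ifs with h
  · rw [Finset.sum_eq_single (⟨c, h⟩ : Fin n)]
    · simp
    · intro b _ hb
      have : (b : ℕ) ≠ c := fun hc => hb (Fin.ext hc)
      simp [this]
    · intro hmem; exact absurd (Finset.mem_univ _) hmem
  · refine Finset.sum_eq_zero fun j _ => ?_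
    have : (j : ℕ) ≠ c := by have := j.isLt; omega
    simp [this]

-- row lemma
lemma pathLap_row {n : ℕ} (y : Fin n → ℝ) (i : ℕ) (hi : i < n) :
    (pathLap n).mulVec y ⟨i, hi⟩ =
      ((if i = 0 then 0 else 1) + (if i + 1 = n then 0 else 1)) * y ⟨i, hi⟩
      - (if h : i + 1 < n then y ⟨i + 1, h⟩ else 0)
      - (if h : 0 < i then y ⟨i - 1, by omega⟩ else 0) := by
  have hexp : (pathLap n).mulVec y ⟨i, hi⟩ = ∑ j : Fin n, pathLap n ⟨i, hi⟩ j * y j := rfl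
  rw [hexp]
  by_cases hi0 : i = 0
  · subst hi0
    have hsplit : ∀ j : Fin n, pathLap n ⟨0, hi⟩ j * y j =
        (if (j : ℕ) = 0 then ((if (0:ℕ) = 0 then (0:ℝ) else 1) + (if 0 + 1 = n then 0 else 1)) * y j else 0)
        + (if (j : ℕ) = 1 then -(y j) else 0) := by
      intro j
      simp only [pathLap, Matrix.of_apply, Fin.ext_iff]
      split_ifs <;> first | ring1 | (exfalso; omega) | (exfalso; casesm* _ ∨ _, False <;> omega)
    rw [Finset.sum_congr rfl (fun j _ => hsplit j), Finset.sum_add_distrib,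
      sum_ite_coe, sum_ite_coe]
    rw [dif_pos hi]
    simp only [lt_irrefl, dif_neg, not_lt, Nat.zero_add]
    by_cases h : 1 < n <;> simp [h] <;> ring
  · have hsplit : ∀ j : Fin n, pathLap n ⟨i, hi⟩ j * y j =
        (if (j : ℕ) = i then ((if i = 0 then (0:ℝ) else 1) + (if i + 1 = n then 0 else 1)) * y j else 0)
        + (if (j : ℕ) = i + 1 then -(y j) else 0)
        + (if (j : ℕ) = i - 1 then -(y j) else 0) := by
      intro j
      simp only [pathLap, Matrix.of_apply, Fin.ext_iff]
      split_ifs <;> first | ring1 | (exfalso; omega) | (exfalso; casesm* _ ∨ _, False <;> omega)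
    rw [Finset.sum_congr rfl (fun j _ => hsplit j), Finset.sum_add_distrib,
      Finset.sum_add_distrib, sum_ite_coe, sum_ite_coe, sum_ite_coe]
    rw [dif_pos hi, dif_pos (show i - 1 < n by omega), dif_pos (show 0 < i by omega)]
    by_cases h : i + 1 < n <;> simp [h] <;> ring

set_option maxHeartbeats 1000000 in
/-- If `n = 2^l`, then every eigenvector of the Laplacian of the path `P_n` has all
entries nonzero; equivalently (by the eigenvector criterion for controllability),
`P_n` is omnicontrollable: it is controllable with any single vertex as leader. -/
theorem path_pow_two_omnicontrollable (l n : ℕ) (hn : n = 2 ^ l)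
    (lam : ℝ) (y : Fin n → ℝ) (hy : y ≠ 0)
    (heig : (pathLap n).mulVec y = lam • y) :
    ∀ r : Fin n, y r ≠ 0 := by
  intro r hr
  -- the sequence of entries
  set Y : ℕ → ℝ := fun j => if h : j < n then y ⟨j, h⟩ else 0 with hYdef
  have hYcoe : ∀ i : Fin n, Y (i : ℕ) = y i := by
    intro i; simp [hYdef, i.isLt]
  have hK : ∀ i : ℕ, (hi : i < n) →
      lam * Y i = ((if i = 0 then 0 else 1) + (if i + 1 = n then 0 else 1)) * Y i
        - Y (i + 1) - (if 0 < i then Y (i - 1) else 0) := by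
    intro i hi
    have h0 := congrFun heig ⟨i, hi⟩
    rw [pathLap_row] at h0
    have e1 : (if h : i + 1 < n then y ⟨i + 1, h⟩ else 0) = Y (i + 1) := by
      by_cases h : i + 1 < n <;> simp [hYdef, h]
    have e2 : (if h : 0 < i then y ⟨i - 1, by omega⟩ else 0)
        = (if 0 < i then Y (i - 1) else 0) := by
      by_cases h : 0 < i <;> simp [hYdef, h, Nat.lt_of_le_of_lt (Nat.sub_le i 1) hi]
    rw [e1, e2] at h0
    simp only [Pi.smul_apply, smul_eq_mul] at h0
    rw [← hYcoe ⟨i, hi⟩] at h0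
    exact h0.symm
  -- case n = 1
  by_cases hn1 : n = 1
  · subst hn1
    obtain ⟨i, hi⟩ := Function.ne_iff.mp hy
    exact hi (by rwa [Subsingleton.elim i r])
  have h2n : 2 ≤ n := by
    have : 0 < 2 ^ l := Nat.pow_pos (by norm_num)
    omega
  obtain ⟨m, rfl⟩ : ∃ m, n = m + 2 := ⟨n - 2, by omega⟩
  -- the three equations
  have eqA : Y 1 = (1 - lam) * Y 0 := by
    have := hK 0 (by omega)
    rw [if_pos rfl, if_neg (by omega : ¬ (0+1 = m+2)), if_neg (lt_irrefl 0)] at this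
    norm_num at this
    linarith
  have hYtop : Y (m + 2) = 0 := by simp [hYdef]
  have eqC : Y m = (1 - lam) * Y (m + 1) := by
    have := hK (m + 1) (by omega)
    rw [if_neg (by omega : ¬ (m+1 = 0)), if_pos rfl, if_pos (by omega : 0 < m + 1), hYtop] at this
    simp only [Nat.add_sub_cancel] at this
    linarith
  have eqB : ∀ i : ℕ, i + 2 < m + 2 → Y (i + 2) = (2 - lam) * Y (i + 1) - Y i := by
    intro i h
    have := hK (i + 1) (by omega)
    rw [if_neg (by omega : ¬ (i+1 = 0)), if_neg (by omega : ¬ (i+1+1 = m+2)),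
      if_pos (by omega : 0 < i + 1)] at this
    simp only [Nat.add_sub_cancel] at this
    linarith
  -- Y 0 ≠ 0
  have hY0 : Y 0 ≠ 0 := by
    intro h0
    have hall : ∀ j, j < m + 2 → Y j = 0 := by
      intro j
      induction j using Nat.twoStepInduction with
      | zero => exact fun _ => h0
      | one => intro _; rw [eqA, h0]; ring
      | more j ih ih1 =>
        intro h
        rw [eqB j h, ih1 (by omega), ih (by omega)]; ring
    apply hy
    funext i
    have := hall (i : ℕ) i.isLt
    rw [hYcoe i] at this
    simpa using this
  have hY0sq : 0 < Y 0 ^ 2 := by positivity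
  -- lam ≥ 0
  have hlam0 : 0 ≤ lam := by
    by_contra hneg
    push_neg at hneg
    have hml : 0 ≤ -lam := by linarith
    have h5 : 0 ≤ (-lam) * Y 0 ^ 2 := mul_nonneg hml hY0sq.le
    have key : ∀ i : ℕ, i + 1 < m + 2 →
        Y 0 ^ 2 ≤ Y i * Y 0 ∧ Y i * Y 0 + (-lam) * Y 0 ^ 2 ≤ Y (i + 1) * Y 0 := by
      intro i
      induction i with
      | zero =>
        intro _
        exact ⟨le_of_eq (by ring), le_of_eq (by rw [eqA]; ring)⟩
      | succ i ih =>
        intro h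
        obtain ⟨h1, h2⟩ := ih (by omega)
        have h3 : Y 0 ^ 2 ≤ Y (i + 1) * Y 0 := by linarith
        refine ⟨h3, ?_⟩
        have hrY0 : Y (i + 2) * Y 0
            = 2 * (Y (i + 1) * Y 0) - lam * (Y (i + 1) * Y 0) - Y i * Y 0 := by
          rw [eqB i (by omega)]; ring
        have h4 : (-lam) * Y 0 ^ 2 ≤ (-lam) * (Y (i + 1) * Y 0) :=
          mul_le_mul_of_nonneg_left h3 hml
        nlinarith [hrY0, h2, h4, h5]
    obtain ⟨h1, h2⟩ := key m (by omega)
    have h3 : Y 0 ^ 2 ≤ Y (m + 1) * Y 0 := by linarith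
    have hCY0 : Y m * Y 0 = Y (m + 1) * Y 0 - lam * (Y (m + 1) * Y 0) := by
      rw [eqC]; ring
    have h4 : (-lam) * Y 0 ^ 2 ≤ (-lam) * (Y (m + 1) * Y 0) :=
      mul_le_mul_of_nonneg_left h3 hml
    nlinarith [hCY0, h2, h4, h5]
  -- lam < 4, via the alternating sequence
  have hlam4 : lam < 4 := by
    by_contra hge
    push_neg at hge
    set Z : ℕ → ℝ := fun i => (-1) ^ i * Y i with hZdef
    have hZ0 : Z 0 = Y 0 := by simp [hZdef]
    have hZA : Z 1 = (lam - 1) * Z 0 := by simp [hZdef, eqA]; ring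
    have hZB : ∀ i : ℕ, i + 2 < m + 2 → Z (i + 2) = (lam - 2) * Z (i + 1) - Z i := by
      intro i h
      simp only [hZdef, eqB i h, pow_succ]
      ring
    have hZC : Z m = (lam - 1) * Z (m + 1) := by
      simp only [hZdef, eqC, pow_succ]
      ring
    have hc : (1:ℝ) ≤ lam - 3 := by linarith
    have hZ0sq : 0 < Z 0 ^ 2 := by rw [hZ0]; exact hY0sq
    have hc5 : 0 < (lam - 3) * Z 0 ^ 2 := by nlinarith
    have key : ∀ i : ℕ, i + 1 < m + 2 →
        Z 0 ^ 2 ≤ Z i * Z 0 ∧ Z i * Z 0 + (lam - 3) * Z 0 ^ 2 ≤ Z (i + 1) * Z 0 := by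
      intro i
      induction i with
      | zero =>
        intro _
        refine ⟨le_of_eq (by ring), ?_⟩
        have : Z 1 * Z 0 = (lam - 1) * (Z 0 * Z 0) := by rw [hZA]; ring
        rw [Nat.zero_add]
        nlinarith
      | succ i ih =>
        intro h
        obtain ⟨h1, h2⟩ := ih (by omega)
        have h3 : Z 0 ^ 2 ≤ Z (i + 1) * Z 0 := by linarith
        refine ⟨h3, ?_⟩
        have hrZ0 : Z (i + 2) * Z 0
            = lam * (Z (i + 1) * Z 0) - 2 * (Z (i + 1) * Z 0) - Z i * Z 0 := by
          rw [hZB i (by omega)]; ring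
        have h4 : (lam - 3) * Z 0 ^ 2 ≤ (lam - 3) * (Z (i + 1) * Z 0) :=
          mul_le_mul_of_nonneg_left h3 (by linarith)
        nlinarith [hrZ0, h2, h4, hc5]
    obtain ⟨h1, h2⟩ := key m (by omega)
    have h3 : Z 0 ^ 2 ≤ Z (m + 1) * Z 0 := by linarith
    have hCZ0 : Z m * Z 0 = lam * (Z (m + 1) * Z 0) - Z (m + 1) * Z 0 := by
      rw [hZC]; ring
    have h4 : (lam - 3) * Z 0 ^ 2 ≤ (lam - 3) * (Z (m + 1) * Z 0) :=
      mul_le_mul_of_nonneg_left h3 (by linarith)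
    nlinarith [hCZ0, h2, h4, hc5]
  -- the angle
  set θ : ℝ := Real.arccos (1 - lam / 2) with hθdef
  have hx1 : (-1 : ℝ) ≤ 1 - lam / 2 := by linarith
  have hx2 : (1 : ℝ) ≥ 1 - lam / 2 := by linarith
  have hcosθ : Real.cos θ = 1 - lam / 2 := Real.cos_arccos hx1 (by linarith)
  have hθ0 : 0 ≤ θ := Real.arccos_nonneg _
  have hθpi : θ < Real.pi := by
    refine lt_of_le_of_ne (Real.arccos_le_pi _) (fun h' => ?_)
    have := Real.arccos_eq_pi.mp h'
    linarith
  have hpi : 0 < Real.pi := Real.pi_pos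
  have hcoshalf : 0 < Real.cos (θ / 2) := by
    apply Real.cos_pos_of_mem_Ioo
    rw [Set.mem_Ioo]
    constructor <;> linarith
  -- product-to-sum identity
  have hid : ∀ A : ℝ, Real.cos (A + θ) = 2 * Real.cos θ * Real.cos A - Real.cos (A - θ) := by
    intro A
    have h1 : Real.cos (A + θ) + Real.cos (A - θ) = 2 * Real.cos θ * Real.cos A := by
      rw [Real.cos_add, Real.cos_sub]; ring
    linarith
  -- the eigenvector formula
  have F : ∀ j : ℕ, j < m + 2 →
      Y j * Real.cos (θ / 2) = Y 0 * Real.cos ((2 * (j : ℝ) + 1) * (θ / 2)) := by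
    intro j
    induction j using Nat.twoStepInduction with
    | zero =>
      intro _
      norm_num
    | one =>
      intro _
      have e1 : (2 * (1 : ℝ) + 1) * (θ / 2) = θ / 2 + θ := by ring
      have e2 : θ / 2 - θ = -(θ / 2) := by ring
      push_cast
      rw [e1, hid (θ / 2), e2, Real.cos_neg, eqA, hcosθ]
      ring
    | more j ih ih1 =>
      intro h
      have hj1 := ih1 (by omega)
      have hj0 := ih (by omega)
      have e1 : (2 * ((j : ℝ) + 2) + 1) * (θ / 2) = (2 * ((j : ℝ) + 1) + 1) * (θ / 2) + θ := by
        ring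
      have e2 : (2 * ((j : ℝ) + 1) + 1) * (θ / 2) - θ = (2 * (j : ℝ) + 1) * (θ / 2) := by
        ring
      have hrec := eqB j h
      push_cast
      rw [e1, hid, e2, hrec, hcosθ]
      push_cast at hj1 hj0
      nlinarith [hj1, hj0]
  -- Y at r vanishes
  have hYr : Y (r : ℕ) = 0 := by rw [hYcoe r]; exact hr
  rcases eq_or_lt_of_le hθ0 with hθz | hθpos
  · -- θ = 0, i.e. lam = 0 : all entries equal Y 0 ≠ 0
    have h := F (r : ℕ) r.isLt
    rw [hYr, ← hθz] at h
    norm_num at h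
    exact hY0 h.symm
  · -- θ > 0
    have hsinhalf : 0 < Real.sin (θ / 2) :=
      Real.sin_pos_of_pos_of_lt_pi (by linarith) (by linarith)
    have hFm := F m (by omega)
    have hFm1 := F (m + 1) (by omega)
    push_cast at hFm1
    have hA : (2*((m:ℝ)+1)+1)*(θ/2) + θ = (2*((m:ℝ)+2)+1)*(θ/2) := by ring
    have hA' : (2*((m:ℝ)+1)+1)*(θ/2) - θ = (2*(m:ℝ)+1)*(θ/2) := by ring
    have hidm := hid ((2*((m:ℝ)+1)+1)*(θ/2))
    rw [hA, hA'] at hidm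
    have hcc : Real.cos ((2*((m:ℝ)+2)+1)*(θ/2)) = Real.cos ((2*((m:ℝ)+1)+1)*(θ/2)) := by
      have h1 : Y m * Real.cos (θ/2) = (1-lam) * (Y (m+1) * Real.cos (θ/2)) := by
        rw [eqC]; ring
      rw [hFm, hFm1] at h1
      have h2 : Y 0 * Real.cos ((2*((m:ℝ)+2)+1)*(θ/2))
          = Y 0 * Real.cos ((2*((m:ℝ)+1)+1)*(θ/2)) := by
        rw [hidm, hcosθ]
        linear_combination -h1
      exact mul_left_cancel₀ hY0 h2
    have hsin0 : Real.sin (((m:ℝ)+2)*θ) = 0 := by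
      have h3 := Real.cos_sub_cos ((2*((m:ℝ)+2)+1)*(θ/2)) ((2*((m:ℝ)+1)+1)*(θ/2))
      rw [hcc, sub_self] at h3
      have e3 : ((2*((m:ℝ)+2)+1)*(θ/2) + (2*((m:ℝ)+1)+1)*(θ/2))/2 = ((m:ℝ)+2)*θ := by ring
      have e4 : ((2*((m:ℝ)+2)+1)*(θ/2) - (2*((m:ℝ)+1)+1)*(θ/2))/2 = θ/2 := by ring
      rw [e3, e4] at h3
      rcases mul_eq_zero.mp h3.symm with h4 | h4
      · linarith
      · linarith
    obtain ⟨k, hk⟩ := Real.sin_eq_zero_iff.mp hsin0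
    -- 0 < k < m + 2
    have hk0 : 0 < k := by
      by_contra hkn
      push_neg at hkn
      have : (k:ℝ) ≤ 0 := by exact_mod_cast hkn
      nlinarith [hpi, hθpos, hk]
    have hklt : (k:ℤ) < (m:ℤ) + 2 := by
      have hr1 : (k:ℝ) < (m:ℝ) + 2 := by nlinarith [hpi, hθpi, hk]
      exact_mod_cast hr1
    -- cos((2r+1)θ/2) = 0
    have hFr := F (r : ℕ) r.isLt
    rw [hYr, zero_mul] at hFr
    have hcr : Real.cos ((2*((r:ℕ):ℝ)+1)*(θ/2)) = 0 :=
      (mul_eq_zero.mp hFr.symm).resolve_left hY0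
    obtain ⟨M, hM⟩ := Real.cos_eq_zero_iff.mp hcr
    have hM2 : (2*((r:ℕ):ℝ)+1)*θ = (2*(M:ℝ)+1)*Real.pi := by
      linear_combination 2 * hM
    have h3 : ((2*((r:ℕ):ℝ)+1)*(k:ℝ))*Real.pi = ((2*(M:ℝ)+1)*((m:ℝ)+2))*Real.pi := by
      linear_combination (2*((r:ℕ):ℝ)+1) * hk + ((m:ℝ)+2) * hM2
    have h4 : (2*((r:ℕ):ℝ)+1)*(k:ℝ) = (2*(M:ℝ)+1)*((m:ℝ)+2) :=
      mul_right_cancel₀ Real.pi_ne_zero h3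
    have hZeq : (2*((r:ℕ):ℤ)+1)*k = (2*M+1)*((m:ℤ)+2) := by exact_mod_cast h4
    have h2l : ((m:ℤ)+2) = 2^l := by exact_mod_cast hn
    have hdvd : (2:ℤ)^l ∣ (2*((r:ℕ):ℤ)+1)*k := by
      rw [hZeq, h2l]
      exact ⟨2*M+1, by ring⟩
    have hcop : IsCoprime ((2:ℤ)^l) (2*((r:ℕ):ℤ)+1) :=
      IsCoprime.pow_left ⟨-((r:ℕ):ℤ), 1, by ring⟩
    have hdk : (2:ℤ)^l ∣ k := hcop.dvd_of_dvd_mul_left hdvd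
    have hle : (2:ℤ)^l ≤ k := Int.le_of_dvd hk0 hdk
    linarith
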